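/- arXiv:2605.24668 — 3 statements merged into one kernel-verified Lean document; each statement's English description precedes it below -/
import Mathlib

section
/- Let λ₁,…,λₙ be real numbers with ∑ᵢ λᵢ = 0, and set Θ(t) = ∑ᵢ arctan(λᵢ/t) for t > 0. Then ∑ᵢ λᵢ·|λᵢ| = −(4/π)·∫₀^∞ t·Θ(t) dt, and this integral is absolutely convergent. -/
/-!
Since `∑ λᵢ = 0`, we have `t Θ(t) = ∑ᵢ (t arctan (λᵢ / t) - λᵢ)`, and each summand is integrable
on `(0, ∞)` with integral `-(π / 4) λᵢ |λᵢ|`. By oddness in `λ` it suffices to take `λ = a > 0`;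
then `t arctan (a / t) - a ≤ 0` has an elementary antiderivative vanishing at `0` and tending to
`-(π / 4) a²` at infinity, the latter because `0 ≤ u - arctan u ≤ u³ / 3` for `u ≥ 0`.
-/

open MeasureTheory Set Real Filter Topology

namespace Real

theorem arctan_le_self {u : ℝ} (hu : 0 ≤ u) : arctan u ≤ u := by
  have hmono : Monotone fun x : ℝ => x - arctan x := by
    have hd : ∀ x : ℝ, HasDerivAt (fun x : ℝ => x - arctan x) (1 - 1 / (1 + x ^ 2)) x :=
      fun x => (hasDerivAt_id x).sub (hasDerivAt_arctan x)
    refine monotone_of_deriv_nonneg (fun x => (hd x).differentiableAt) fun x => ?_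
    rw [(hd x).deriv, sub_nonneg, div_le_one (by positivity)]
    nlinarith
  simpa using hmono hu

theorem sub_pow_three_div_three_le_arctan {u : ℝ} (hu : 0 ≤ u) : u - u ^ 3 / 3 ≤ arctan u := by
  have hmono : Monotone fun x : ℝ => arctan x - (x - x ^ 3 / 3) := by
    have hd : ∀ x : ℝ, HasDerivAt (fun x : ℝ => arctan x - (x - x ^ 3 / 3))
        (1 / (1 + x ^ 2) - (1 - x ^ 2)) x := fun x =>
      (hasDerivAt_arctan x).sub
        (((hasDerivAt_id x).sub ((hasDerivAt_pow 3 x).div_const 3)).congr_deriv (by simp))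
    refine monotone_of_deriv_nonneg (fun x => (hd x).differentiableAt) fun x => ?_
    rw [(hd x).deriv, sub_nonneg, le_div_iff₀ (by positivity)]
    nlinarith [sq_nonneg (x ^ 2)]
  simpa using hmono hu

theorem arctan_div_eq_pi_div_two_sub {a t : ℝ} (ha : 0 < a) (ht : 0 < t) :
    arctan (a / t) = π / 2 - arctan (t / a) := by
  rw [← arctan_inv_of_pos (div_pos ht ha), inv_div]

end Real

theorem mul_arctan_div_sub_nonpos {a t : ℝ} (ha : 0 ≤ a) (ht : 0 < t) :
    t * arctan (a / t) - a ≤ 0 := by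
  have h := mul_le_mul_of_nonneg_left (arctan_le_self (div_nonneg ha ht.le)) ht.le
  rw [mul_div_cancel₀ _ ht.ne'] at h
  linarith

theorem tendsto_mul_mul_arctan_div_sub_atTop {a : ℝ} (ha : 0 ≤ a) :
    Tendsto (fun t : ℝ => t * (t * arctan (a / t) - a)) atTop (𝓝 0) := by
  have hlower : Tendsto (fun t : ℝ => -(a ^ 3 / 3) / t) atTop (𝓝 0) :=
    tendsto_const_nhds.div_atTop tendsto_id
  refine tendsto_of_tendsto_of_tendsto_of_le_of_le' hlower tendsto_const_nhds ?_ ?_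
  all_goals filter_upwards [eventually_gt_atTop 0] with t ht
  · have h := mul_le_mul_of_nonneg_left
      (sub_pow_three_div_three_le_arctan (div_nonneg ha ht.le)) (sq_nonneg t)
    have hpoly : t ^ 2 * (a / t - (a / t) ^ 3 / 3) = a * t + -(a ^ 3 / 3) / t := by
      field_simp
      ring
    linarith
  · exact mul_nonpos_of_nonneg_of_nonpos ht.le (mul_arctan_div_sub_nonpos ha ht)

/-- For `t > 0` this is `t² / 2 * arctan (a / t) - a * t / 2 - a² / 2 * arctan (t / a)`, an
antiderivative of `t * arctan (a / t) - a`; in the form below it is smooth at `t = 0`. -/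
noncomputable def coulsonPrimitive (a t : ℝ) : ℝ :=
  π / 4 * t ^ 2 - (t ^ 2 + a ^ 2) / 2 * arctan (t / a) - a * t / 2

theorem hasDerivAt_coulsonPrimitive {a : ℝ} (ha : a ≠ 0) (x : ℝ) :
    HasDerivAt (coulsonPrimitive a) (x * (π / 2 - arctan (x / a)) - a) x := by
  have harctan := ((hasDerivAt_id' x).div_const a).arctan
  have h := ((((hasDerivAt_pow 2 x).const_mul (π / 4)).sub
    ((((hasDerivAt_pow 2 x).add_const (a ^ 2)).div_const 2).mul harctan)).sub
    (((hasDerivAt_id x).const_mul a).div_const 2))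
  refine h.congr_deriv ?_
  have : x ^ 2 + a ^ 2 ≠ 0 := by positivity
  field_simp
  ring

theorem continuous_coulsonPrimitive (a : ℝ) : Continuous (coulsonPrimitive a) := by
  unfold coulsonPrimitive
  fun_prop

theorem hasDerivAt_coulsonPrimitive_of_pos {a x : ℝ} (ha : 0 < a) (hx : 0 < x) :
    HasDerivAt (coulsonPrimitive a) (x * arctan (a / x) - a) x := by
  rw [arctan_div_eq_pi_div_two_sub ha hx]
  exact hasDerivAt_coulsonPrimitive ha.ne' x

theorem tendsto_coulsonPrimitive_atTop {a : ℝ} (ha : 0 < a) :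
    Tendsto (coulsonPrimitive a) atTop (𝓝 (-(π / 4) * a ^ 2)) := by
  have harctan : Tendsto (fun t => arctan (t / a)) atTop (𝓝 (π / 2)) :=
    tendsto_nhds_of_tendsto_nhdsWithin tendsto_arctan_atTop |>.comp
      (tendsto_id.atTop_div_const ha)
  have h := ((tendsto_mul_mul_arctan_div_sub_atTop ha.le).div_const 2).sub
    (harctan.const_mul (a ^ 2 / 2))
  convert h.congr' ?_ using 2
  · ring
  filter_upwards [eventually_gt_atTop 0] with t ht
  rw [coulsonPrimitive, arctan_div_eq_pi_div_two_sub ha ht]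
  ring

theorem integrableOn_mul_arctan_div_sub_of_pos {a : ℝ} (ha : 0 < a) :
    IntegrableOn (fun t => t * arctan (a / t) - a) (Ioi 0) :=
  integrableOn_Ioi_deriv_of_nonpos (continuous_coulsonPrimitive a).continuousWithinAt
    (fun _ hx => hasDerivAt_coulsonPrimitive_of_pos ha hx)
    (fun _ hx => mul_arctan_div_sub_nonpos ha.le hx) (tendsto_coulsonPrimitive_atTop ha)

theorem integral_mul_arctan_div_sub_of_pos {a : ℝ} (ha : 0 < a) :
    ∫ t in Ioi 0, (t * arctan (a / t) - a) = -(π / 4) * a ^ 2 := by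
  rw [integral_Ioi_of_hasDerivAt_of_nonpos (continuous_coulsonPrimitive a).continuousWithinAt
    (fun _ hx => hasDerivAt_coulsonPrimitive_of_pos ha hx)
    (fun _ hx => mul_arctan_div_sub_nonpos ha.le hx) (tendsto_coulsonPrimitive_atTop ha)]
  simp [coulsonPrimitive]

theorem mul_arctan_neg_div_sub_neg (a t : ℝ) :
    t * arctan (-a / t) - -a = -(t * arctan (a / t) - a) := by
  rw [neg_div, arctan_neg]
  ring

theorem integrableOn_mul_arctan_div_sub (a : ℝ) :
    IntegrableOn (fun t => t * arctan (a / t) - a) (Ioi 0) := by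
  rcases lt_trichotomy a 0 with ha | rfl | ha
  · simpa only [Pi.neg_def, mul_arctan_neg_div_sub_neg, neg_neg] using
      (integrableOn_mul_arctan_div_sub_of_pos (neg_pos.2 ha)).neg
  · simp
  · exact integrableOn_mul_arctan_div_sub_of_pos ha

theorem integral_mul_arctan_div_sub (a : ℝ) :
    ∫ t in Ioi 0, (t * arctan (a / t) - a) = -(π / 4) * (a * |a|) := by
  rcases lt_trichotomy a 0 with ha | rfl | ha
  · have h := integral_mul_arctan_div_sub_of_pos (neg_pos.2 ha)
    simp only [mul_arctan_neg_div_sub_neg, integral_neg] at h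
    rw [abs_of_neg ha]
    linarith
  · simp
  · rw [integral_mul_arctan_div_sub_of_pos ha, abs_of_pos ha, sq]

/-- Coulson-type identity: if `∑ i, λ i = 0` and `Θ(t) = ∑ i, arctan (λ i / t)`, then
`∑ i, λ i * |λ i| = -(4/π) ∫₀^∞ t Θ(t) dt`, the integral being absolutely convergent. -/
theorem coulson_type_identity {n : ℕ} (l : Fin n → ℝ) (hsum : ∑ i, l i = 0) :
    IntegrableOn (fun t : ℝ => t * ∑ i, arctan (l i / t)) (Ioi 0) ∧
    ∑ i, l i * |l i| =
      -(4 / π) * ∫ t in Ioi (0 : ℝ), t * ∑ i, arctan (l i / t) := by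
  have hsplit : (fun t : ℝ => t * ∑ i, arctan (l i / t))
      = fun t => ∑ i, (t * arctan (l i / t) - l i) := by
    funext t
    rw [Finset.sum_sub_distrib, hsum, sub_zero, Finset.mul_sum]
  have hint i := integrableOn_mul_arctan_div_sub (l i)
  rw [hsplit, integral_finsetSum _ fun i _ => hint i]
  refine ⟨integrable_finsetSum _ fun i _ => hint i, ?_⟩
  simp only [integral_mul_arctan_div_sub, ← Finset.mul_sum]
  field_simp
end

section
/- For an odd cycle C_k, s⁺(C_k) − s⁻(C_k) = 2(sec(π/k) − 1) if k ≡ 3 (mod 4), and s⁺(C_k) − s⁻(C_k) = −2(sec(π/k) − 1) if k ≡ 1 (mod 4). -/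
variable {V : Type*}

/-- Number of matchings of size `j` in `H` (sets of `j` pairwise vertex-disjoint edges). -/
noncomputable def mcount (H : SimpleGraph V) (j : ℕ) : ℕ :=
  Set.ncard {M : Finset (Sym2 V) | (∀ e ∈ M, e ∈ H.edgeSet) ∧ M.card = j ∧
    ∀ e ∈ M, ∀ f ∈ M, e ≠ f → ∀ v : V, ¬(v ∈ e ∧ v ∈ f)}

/-- The matching polynomial of `H`, as a function on `ℂ`. -/
noncomputable def matchPolyFun [Fintype V] (H : SimpleGraph V) (x : ℂ) : ℂ :=
  ∑ j ∈ Finset.range (Fintype.card V / 2 + 1),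
    (-1 : ℂ) ^ j * (mcount H j : ℂ) * x ^ (Fintype.card V - 2 * j)

/-- The characteristic polynomial `det (x • 1 - A(G))` of the adjacency matrix, as a function. -/
noncomputable def charFun [Fintype V] [DecidableEq V] (G : SimpleGraph V)
    [DecidableRel G.Adj] (x : ℂ) : ℂ :=
  (x • (1 : Matrix V V ℂ) - G.adjMatrix ℂ).det

/-- The adjacency matrix of a graph is Hermitian (symmetric). -/
theorem adjHerm [Fintype V] [DecidableEq V] (G : SimpleGraph V) [DecidableRel G.Adj] :
    (G.adjMatrix ℝ).IsHermitian := by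
  rw [Matrix.IsHermitian, Matrix.conjTranspose_eq_transpose_of_trivial]
  exact SimpleGraph.isSymm_adjMatrix G

/-- Positive square energy. -/
noncomputable def sPlus [Fintype V] [DecidableEq V] (G : SimpleGraph V) [DecidableRel G.Adj] : ℝ :=
  ∑ i, if 0 < (adjHerm G).eigenvalues i then ((adjHerm G).eigenvalues i) ^ 2 else 0

/-- Negative square energy. -/
noncomputable def sMinus [Fintype V] [DecidableEq V] (G : SimpleGraph V) [DecidableRel G.Adj] : ℝ :=
  ∑ i, if (adjHerm G).eigenvalues i < 0 then ((adjHerm G).eigenvalues i) ^ 2 else 0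

open Real

/-!
The Fourier vectors `(ζ ^ (i * j))ᵢ`, `ζ = exp (2πi / k)`, diagonalise the adjacency matrix of
`C_k`, so its eigenvalues are `t_j = 2 cos (2πj / k)` and `s⁺ - s⁻ = ∑ t_j |t_j|`. Write
`k = 4m + 2 + ε` with `ε = ±1`: then `t_j > 0` exactly for `j ≤ m` and `j ≥ k - m`. With the
symmetry `t_{k-j} = t_j`, `t_j² = 2 + 2 cos (4πj / k)` and `∑ t_j² = 2k`, the signed sum
reduces to the Dirichlet kernel `∑_{j=1}^m cos (4πj / k)`, which equals
`ε / (4 cos (π / k)) - 1 / 2` because `(2m + 1) · 2π / k = π - επ / k`.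
-/

open Finset Matrix Polynomial SimpleGraph

lemma pow_val_add_of_pow_eq_one {M : Type*} [Monoid M] {k : ℕ} {ζ : M} (hζ : ζ ^ k = 1)
    (a b : Fin k) : ζ ^ (a + b : Fin k).val = ζ ^ a.val * ζ ^ b.val := by
  rw [Fin.val_add, ← pow_eq_pow_mod _ hζ, pow_add]

lemma adjMatrix_cycleGraph_mul_vandermonde {K : Type*} [Field K] {k : ℕ} (hk : 3 ≤ k) {ζ : K}
    (hζ : ζ ^ k = 1) :
    (cycleGraph k).adjMatrix K * vandermonde (fun i : Fin k ↦ ζ ^ i.val) =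
      vandermonde (fun i : Fin k ↦ ζ ^ i.val) *
        diagonal (fun j ↦ ζ ^ j.val + ζ⁻¹ ^ j.val) := by
  obtain ⟨n, rfl⟩ : ∃ n, k = n + 2 := ⟨k - 2, by omega⟩
  have hζ0 : ζ ≠ 0 := by rintro rfl; simp at hζ
  have hnext (i : Fin (n + 2)) : ζ ^ (i + 1).val = ζ ^ i.val * ζ := by
    rw [pow_val_add_of_pow_eq_one hζ, Fin.val_one, pow_one]
  have hprev (i : Fin (n + 2)) : ζ ^ (i - 1).val = ζ ^ i.val * ζ⁻¹ := by
    rw [eq_mul_inv_iff_mul_eq₀ hζ0, ← hnext, sub_add_cancel]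
  have hne (i : Fin (n + 2)) : i - 1 ≠ i + 1 := by
    rw [Ne, sub_eq_iff_eq_add, add_assoc, left_eq_add, Fin.ext_iff, Fin.val_add, Fin.val_one,
      Fin.val_zero, Nat.mod_eq_of_lt (by omega)]
    omega
  ext i j
  rw [adjMatrix_mul_apply, cycleGraph_neighborFinset, sum_pair (hne i), mul_diagonal]
  simp only [vandermonde_apply, hnext, hprev]
  ring

lemma Matrix.charpoly_eq_of_mul_eq_mul {R n : Type*} [CommRing R] [Fintype n] [DecidableEq n]
    {A D F : Matrix n n R} (hF : IsUnit F.det) (h : A * F = F * D) : A.charpoly = D.charpoly := by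
  rw [← mul_nonsing_inv_cancel_right F A hF, h, charpoly_mul_comm,
    nonsing_inv_mul_cancel_left F D hF]

lemma charpoly_adjMatrix_cycleGraph {k : ℕ} (hk : 3 ≤ k) :
    ((cycleGraph k).adjMatrix ℝ).charpoly =
      ∏ j : Fin k, (X - C (2 * cos (2 * π * j / k))) := by
  set ζ := Complex.exp (2 * π * Complex.I / k)
  have hζ : IsPrimitiveRoot ζ k := Complex.isPrimitiveRoot_exp k (by omega)
  have heig (j : ℕ) : ζ ^ j + ζ⁻¹ ^ j = ((2 * cos (2 * π * j / k) : ℝ) : ℂ) := by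
    have hpow : ζ ^ j = Complex.exp ((2 * π * j / k : ℝ) * Complex.I) := by
      rw [← Complex.exp_nat_mul]
      push_cast
      ring_nf
    rw [inv_pow, hpow, ← Complex.exp_neg, Complex.ofReal_mul, Complex.ofReal_cos, Complex.cos]
    push_cast
    ring_nf
  have hF : IsUnit (vandermonde fun i : Fin k ↦ ζ ^ i.val).det :=
    (det_vandermonde_ne_zero_iff.mpr fun i j hij ↦ Fin.ext (hζ.pow_inj i.isLt j.isLt hij)).isUnit
  have hmap : (adjMatrix ℝ (cycleGraph k)).map (algebraMap ℝ ℂ) =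
      adjMatrix ℂ (cycleGraph k) := by
    ext i j
    simp [adjMatrix_apply, apply_ite]
  apply Polynomial.map_injective (algebraMap ℝ ℂ) Complex.ofReal_injective
  rw [← charpoly_map, hmap, charpoly_eq_of_mul_eq_mul hF
    (adjMatrix_cycleGraph_mul_vandermonde hk hζ.pow_eq_one), charpoly_diagonal,
    Polynomial.map_prod]
  refine prod_congr rfl fun j _ ↦ ?_
  rw [heig]
  simp

lemma Polynomial.roots_prod_X_sub_C_univ {R ι : Type*} [CommRing R] [IsDomain R] [Fintype ι]
    (μ : ι → R) : (∏ j, (X - C (μ j))).roots = univ.val.map μ := by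
  rw [prod_eq_multiset_prod, ← roots_multiset_prod_X_sub_C (univ.val.map μ), Multiset.map_map]
  rfl

lemma Matrix.IsHermitian.sum_comp_eigenvalues_eq {n ι : Type*} [Fintype n] [DecidableEq n]
    [Fintype ι] {A : Matrix n n ℝ} (hA : A.IsHermitian) {μ : ι → ℝ}
    (h : A.charpoly = ∏ j, (X - C (μ j))) (f : ℝ → ℝ) :
    ∑ i, f (hA.eigenvalues i) = ∑ j, f (μ j) := by
  have hroots := congrArg roots (hA.charpoly_eq.symm.trans h)
  simp only [roots_prod_X_sub_C_univ, RCLike.ofReal_real_eq_id, id] at hroots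
  have := congrArg (fun s ↦ (s.map f).sum) hroots
  simpa only [Multiset.map_map, Function.comp_def, ← sum_eq_multiset_sum] using this

lemma sPlus_sub_sMinus [Fintype V] [DecidableEq V] (G : SimpleGraph V) [DecidableRel G.Adj] :
    sPlus G - sMinus G = ∑ i, (adjHerm G).eigenvalues i * |(adjHerm G).eigenvalues i| := by
  rw [sPlus, sMinus, ← sum_sub_distrib]
  refine sum_congr rfl fun i _ ↦ ?_
  rcases lt_trichotomy ((adjHerm G).eigenvalues i) 0 with h | h | h
  · rw [if_neg h.not_gt, if_pos h, abs_of_neg h, sq]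
    ring
  · simp [h]
  · rw [if_pos h, if_neg h.not_gt, abs_of_pos h, sq, sub_zero]

lemma sum_Ico_sub_eq_sum_range_of_symm {M : Type*} [AddCommMonoid M] {f : ℕ → M} {k m : ℕ}
    (hmk : m ≤ k) (hsymm : ∀ j ≤ k, f (k - j) = f j) :
    ∑ j ∈ Ico (k - m) k, f j = ∑ j ∈ range m, f (j + 1) := by
  have := sum_Ico_reflect f 1 (by omega : m + 1 ≤ k + 1)
  rw [Nat.add_sub_add_right, Nat.add_sub_cancel] at this
  rw [← this, sum_Ico_eq_sum_range, Nat.add_sub_cancel]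
  refine sum_congr rfl fun j hj ↦ ?_
  rw [add_comm 1 j, hsymm _ (by have := mem_range.mp hj; omega)]

lemma sum_mul_abs_eq_of_symm {t : ℕ → ℝ} {k m : ℕ} (hmk : 2 * m < k)
    (hsymm : ∀ j ≤ k, t (k - j) = t j) (hpos : ∀ j ≤ m, 0 ≤ t j)
    (hneg : ∀ j, m < j → j < k - m → t j ≤ 0) :
    ∑ j ∈ range k, t j * |t j| =
      2 * (t 0 ^ 2 + 2 * ∑ j ∈ range m, t (j + 1) ^ 2) - ∑ j ∈ range k, t j ^ 2 := by
  have hsplit (f : ℕ → ℝ) (hf : ∀ j ≤ k, f (k - j) = f j) : ∑ j ∈ range k, f j =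
      ∑ j ∈ range (m + 1), f j + ∑ j ∈ Ico (m + 1) (k - m), f j +
        ∑ j ∈ range m, f (j + 1) := by
    rw [← sum_Ico_sub_eq_sum_range_of_symm (by omega) hf, range_eq_Ico, range_eq_Ico,
      sum_Ico_consecutive _ (by omega) (by omega), sum_Ico_consecutive _ (by omega) (by omega)]
  have hlow : ∑ j ∈ range (m + 1), t j * |t j| = ∑ j ∈ range (m + 1), t j ^ 2 :=
    sum_congr rfl fun j hj ↦ by
      rw [abs_of_nonneg (hpos j (Nat.lt_succ_iff.mp (mem_range.mp hj))), sq]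
  have hmid : ∑ j ∈ Ico (m + 1) (k - m), t j * |t j| =
      -∑ j ∈ Ico (m + 1) (k - m), t j ^ 2 := by
    rw [← sum_neg_distrib]
    refine sum_congr rfl fun j hj ↦ ?_
    rw [mem_Ico] at hj
    rw [abs_of_nonpos (hneg j (by omega) hj.2), sq]
    ring
  have hhigh : ∑ j ∈ range m, t (j + 1) * |t (j + 1)| = ∑ j ∈ range m, t (j + 1) ^ 2 :=
    sum_congr rfl fun j hj ↦ by rw [abs_of_nonneg (hpos _ (mem_range.mp hj)), sq]
  rw [hsplit _ (fun j hj ↦ by rw [hsymm j hj]), hsplit _ (fun j hj ↦ by rw [hsymm j hj]),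
    hlow, hmid, hhigh, sum_range_succ' _ m]
  ring

lemma two_sin_half_mul_sum_range_cos (x : ℝ) (m : ℕ) :
    2 * sin (x / 2) * ∑ j ∈ range m, cos ((j + 1) * x) =
      sin ((2 * m + 1) * x / 2) - sin (x / 2) := by
  induction m with
  | zero => simp
  | succ m ih =>
    have h₁ : (2 * ((m + 1 : ℕ) : ℝ) + 1) * x / 2 = (m + 1) * x + x / 2 := by push_cast; ring
    have h₂ : (2 * (m : ℝ) + 1) * x / 2 = (m + 1) * x - x / 2 := by ring
    rw [sum_range_succ, mul_add, ih, h₁, h₂, sin_add, sin_sub]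
    ring

lemma sin_two_pi_div_pos {k : ℕ} (hk : 3 ≤ k) : 0 < sin (2 * π / k) := by
  have hk' : (3 : ℝ) ≤ k := by exact_mod_cast hk
  apply sin_pos_of_pos_of_lt_pi (by positivity)
  rw [div_lt_iff₀ (by positivity)]
  nlinarith [pi_pos]

lemma sum_range_cos_mul_four_pi_div {k : ℕ} (hk : 3 ≤ k) :
    ∑ j ∈ range k, cos (j * (4 * π / k)) = 0 := by
  obtain ⟨n, rfl⟩ : ∃ n, k = n + 1 := ⟨k - 1, by omega⟩
  have hD := two_sin_half_mul_sum_range_cos (4 * π / (n + 1 : ℕ)) n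
  have harg : (2 * (n : ℝ) + 1) * (4 * π / (n + 1 : ℕ)) / 2 =
      -(2 * π / (n + 1 : ℕ)) + (2 : ℕ) * (2 * π) := by
    field_simp
    push_cast
    ring
  rw [harg, sin_add_nat_mul_two_pi, sin_neg,
    show 4 * π / (n + 1 : ℕ) / 2 = 2 * π / (n + 1 : ℕ) by ring] at hD
  have hS : ∑ j ∈ range n, cos ((j + 1) * (4 * π / (n + 1 : ℕ))) = -1 :=
    mul_left_cancel₀ (mul_pos two_pos (sin_two_pi_div_pos hk)).ne' (by rw [hD]; ring)
  rw [sum_range_succ', Nat.cast_zero, zero_mul, cos_zero]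
  push_cast at hS ⊢
  linarith

lemma four_cos_pi_div_mul_sum_range_cos {k m : ℕ} {ε : ℝ} (hε : ε = 1 ∨ ε = -1)
    (hkm : (k : ℝ) = 4 * m + 2 + ε) (hk : 1 < k) :
    4 * cos (π / k) * ∑ j ∈ range m, cos ((j + 1) * (4 * π / k)) = ε - 2 * cos (π / k) := by
  have hk0 : (0 : ℝ) < k := by positivity
  have hsin_pos : 0 < sin (π / k) := by
    apply sin_pos_of_pos_of_lt_pi (by positivity)
    rw [div_lt_iff₀ hk0]
    nlinarith [pi_pos, (by exact_mod_cast hk : (1 : ℝ) < k)]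
  have hD := two_sin_half_mul_sum_range_cos (4 * π / k) m
  have harg : (2 * m + 1) * (4 * π / k) / 2 = π - ε * (π / k) := by
    field_simp
    linear_combination -2 * hkm
  have hsin : sin (ε * (π / k)) = ε * sin (π / k) := by
    rcases hε with rfl | rfl <;> simp
  rw [harg, sin_pi_sub, hsin, show 4 * π / k / 2 = 2 * (π / k) by ring, sin_two_mul] at hD
  exact mul_left_cancel₀ hsin_pos.ne' (by linear_combination hD)

lemma cos_nat_mul_two_pi_div_nonneg {j k : ℕ} (h : 4 * j ≤ k) :
    0 ≤ cos (j * (2 * π / k)) := by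
  rcases Nat.eq_zero_or_pos k with rfl | hk
  · simp
  have hjk : 4 * (j : ℝ) ≤ k := by exact_mod_cast h
  apply cos_nonneg_of_neg_pi_div_two_le_of_le
  · linarith [pi_pos, (by positivity : 0 ≤ (j : ℝ) * (2 * π / k))]
  · rw [mul_div_assoc', div_le_iff₀ (by positivity)]
    nlinarith [pi_pos]

lemma cos_nat_mul_two_pi_div_nonpos {j k : ℕ} (hk : 0 < k) (h₁ : k ≤ 4 * j)
    (h₂ : 4 * j ≤ 3 * k) : cos (j * (2 * π / k)) ≤ 0 := by
  have h₁' : (k : ℝ) ≤ 4 * j := by exact_mod_cast h₁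
  have h₂' : 4 * (j : ℝ) ≤ 3 * k := by exact_mod_cast h₂
  apply cos_nonpos_of_pi_div_two_le_of_le
  · rw [mul_div_assoc', le_div_iff₀ (by positivity)]
    nlinarith [pi_pos]
  · rw [mul_div_assoc', div_le_iff₀ (by positivity)]
    nlinarith [pi_pos]

lemma cos_nat_sub_mul_two_pi_div {j k : ℕ} (hj : j ≤ k) :
    cos ((k - j : ℕ) * (2 * π / k)) = cos (j * (2 * π / k)) := by
  rcases Nat.eq_zero_or_pos k with rfl | hk
  · rw [Nat.le_zero.mp hj]
  rw [Nat.cast_sub hj, sub_mul, mul_div_cancel₀ _ (by positivity), cos_two_pi_sub]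

lemma sum_range_two_cos_mul_abs {k m : ℕ} {ε : ℝ} (hε : ε = 1 ∨ ε = -1)
    (hkm : (k : ℝ) = 4 * m + 2 + ε) (hk : 3 ≤ k) :
    ∑ j ∈ range k, 2 * cos (2 * π * j / k) * |2 * cos (2 * π * j / k)| =
      ε * (2 * (1 / cos (π / k) - 1)) := by
  have hmk : 4 * m < k ∧ k < 4 * m + 4 := by
    have : (4 * m : ℝ) < k ∧ (k : ℝ) < 4 * m + 4 := by
      rcases hε with rfl | rfl <;> constructor <;> linarith
    exact_mod_cast this
  set t : ℕ → ℝ := fun j ↦ 2 * cos (j * (2 * π / k)) with ht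
  have hsq (j : ℕ) : t j ^ 2 = 2 + 2 * cos (j * (4 * π / k)) := by
    rw [ht, mul_pow, cos_sq]
    ring_nf
  have hsum_sq : ∑ j ∈ range k, t j ^ 2 = 2 * k := by
    simp only [hsq, sum_add_distrib, ← mul_sum, sum_range_cos_mul_four_pi_div hk]
    simp [mul_comm]
  have hhalf : ∑ j ∈ range m, t (j + 1) ^ 2 =
      2 * m + 2 * ∑ j ∈ range m, cos ((j + 1) * (4 * π / k)) := by
    simp only [hsq, sum_add_distrib, ← mul_sum]
    push_cast
    simp [mul_comm]
  have hsigned := sum_mul_abs_eq_of_symm (t := t) (k := k) (m := m) (by omega)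
    (fun j hj ↦ by simp only [ht, cos_nat_sub_mul_two_pi_div hj])
    (fun j hj ↦ mul_nonneg two_pos.le (cos_nat_mul_two_pi_div_nonneg (by omega)))
    (fun j hj₁ hj₂ ↦ mul_nonpos_of_nonneg_of_nonpos two_pos.le
      (cos_nat_mul_two_pi_div_nonpos (by omega) (by omega) (by omega)))
  have hcos_pos : 0 < cos (π / k) := by
    have : π / k ≤ π / 3 := div_le_div_of_nonneg_left pi_pos.le three_pos (by exact_mod_cast hk)
    have : 0 < π / k := by positivity
    exact cos_pos_of_mem_Ioo ⟨by linarith, by linarith [pi_pos]⟩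
  have hDirichlet := four_cos_pi_div_mul_sum_range_cos hε hkm (by omega)
  simp only [show ∀ j : ℕ, 2 * π * j / k = j * (2 * π / k) from fun j ↦ by ring]
  rw [hsigned, hsum_sq, hhalf, show t 0 = 2 by simp [ht]]
  generalize ∑ j ∈ range m, cos ((j + 1) * (4 * π / k)) = S at hDirichlet ⊢
  field_simp
  linear_combination hDirichlet - cos (π / k) * hkm

theorem odd_cycle_square_energy_general (k : ℕ) (hk : 3 ≤ k) :
    (k % 4 = 3 → sPlus (SimpleGraph.cycleGraph k) - sMinus (SimpleGraph.cycleGraph k) =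
      2 * (1 / Real.cos (π / k) - 1)) ∧
    (k % 4 = 1 → sPlus (SimpleGraph.cycleGraph k) - sMinus (SimpleGraph.cycleGraph k) =
      -(2 * (1 / Real.cos (π / k) - 1))) := by
  have hsum : sPlus (cycleGraph k) - sMinus (cycleGraph k) =
      ∑ j ∈ range k, 2 * cos (2 * π * j / k) * |2 * cos (2 * π * j / k)| := by
    rw [sPlus_sub_sMinus, (adjHerm _).sum_comp_eigenvalues_eq (charpoly_adjMatrix_cycleGraph hk)
      (fun x ↦ x * |x|)]
    exact Fin.sum_univ_eq_sum_range
      (fun j ↦ 2 * cos (2 * π * j / k) * |2 * cos (2 * π * j / k)|) k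
  refine ⟨fun h3 ↦ ?_, fun h1 ↦ ?_⟩
  · have hkm : (k : ℝ) = 4 * (k / 4 : ℕ) + 2 + 1 := by
      norm_cast
      omega
    rw [hsum, sum_range_two_cos_mul_abs (Or.inl rfl) hkm hk, one_mul]
  · have hkm : (k : ℝ) = 4 * (k / 4 : ℕ) + 2 + -1 := by
      rw [← sub_eq_add_neg, eq_sub_iff_add_eq]
      norm_cast
      omega
    rw [hsum, sum_range_two_cos_mul_abs (Or.inr rfl) hkm hk, neg_one_mul]

/-- For an odd cycle `C_k` (`k ≥ 3`),
`s⁺(C_k) − s⁻(C_k) = ±2(sec(π/k) − 1)` according to `k mod 4`. -/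
theorem odd_cycle_square_energy (k : ℕ) (hk : 3 ≤ k) (hodd : Odd k) :
    (k % 4 = 3 → sPlus (SimpleGraph.cycleGraph k) - sMinus (SimpleGraph.cycleGraph k) =
      2 * (1 / Real.cos (π / k) - 1)) ∧
    (k % 4 = 1 → sPlus (SimpleGraph.cycleGraph k) - sMinus (SimpleGraph.cycleGraph k) =
      -(2 * (1 / Real.cos (π / k) - 1))) :=
  odd_cycle_square_energy_general k hk
end

section
/- Let λ₁,…,λₙ be real numbers with ∑ᵢ λᵢ = 0, and Θ(t) = ∑ᵢ arctan(λᵢ/t) for t > 0. If Θ(t) > 0 for all t > 0, then ∑ᵢ λᵢ·|λᵢ| < 0; if Θ(t) < 0 for all t > 0, then ∑ᵢ λᵢ·|λᵢ| > 0. -/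
/-!
The function `F c t = t²/2 · arctan (c/t) + ct/2 - c²/2 · arctan (t/c)` is a primitive of
`t ↦ t · arctan (c/t)` on `(0, ∞)`, with `F c t → 0` as `t → 0⁺` and
`F c t - ct → -(π/4) c|c|` as `t → ∞`. Summing over the `λᵢ`, the linear terms cancel since
`∑ λᵢ = 0`, so `H = ∑ F λᵢ` has `H' = t Θ(t)` and increases from `0` to `-(π/4) ∑ λᵢ|λᵢ|`
when `Θ > 0`. The case `Θ < 0` follows by replacing `λ` with `-λ`.
-/

open Real Filter Topology Set

lemma abs_arctan_sub_self_le (x : ℝ) : |arctan x - x| ≤ |x| ^ 3 := by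
  have hderiv (y : ℝ) : HasDerivAt (fun y => arctan y - y) (1 / (1 + y ^ 2) - 1) y :=
    (hasDerivAt_arctan y).sub (hasDerivAt_id y)
  have hbound : ∀ y ∈ Icc (-|x|) |x|, ‖1 / (1 + y ^ 2) - 1‖ ≤ x ^ 2 := fun y hy => by
    have hyx : y ^ 2 ≤ x ^ 2 := sq_le_sq.2 (abs_le.2 hy)
    have hpos : (0 : ℝ) < 1 + y ^ 2 := by positivity
    rw [Real.norm_eq_abs, abs_le, div_sub_one hpos.ne', le_div_iff₀ hpos, div_le_iff₀ hpos]
    constructor <;> nlinarith [sq_nonneg y, sq_nonneg x]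
  have h := (convex_Icc (-|x|) |x|).norm_image_sub_le_of_norm_hasDerivWithin_le
    (fun y _ => (hderiv y).hasDerivWithinAt) hbound (x := 0) (y := x)
    (by simp) (by simp [le_abs_self, neg_abs_le])
  simpa [pow_succ, sq_abs, mul_comm] using h

noncomputable def primitiveMulArctanDiv (c t : ℝ) : ℝ :=
  t ^ 2 / 2 * arctan (c / t) + c * t / 2 - c ^ 2 / 2 * arctan (t / c)

lemma hasDerivAt_primitiveMulArctanDiv (c : ℝ) {t : ℝ} (ht : t ≠ 0) :
    HasDerivAt (primitiveMulArctanDiv c) (t * arctan (c / t)) t := by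
  rcases eq_or_ne c 0 with rfl | hc
  · have h0 : primitiveMulArctanDiv 0 = fun _ => 0 := by ext; simp [primitiveMulArctanDiv]
    simpa [h0] using hasDerivAt_const t (0 : ℝ)
  have h := ((((hasDerivAt_pow 2 t).div_const 2).mul
      ((hasDerivAt_const t c).div (hasDerivAt_id t) ht).arctan).add
      (((hasDerivAt_id t).const_mul c).div_const 2)).sub
      (((hasDerivAt_id t).div_const c).arctan.const_mul (c ^ 2 / 2))
  refine h.congr_deriv ?_
  simp only [Pi.div_apply, id]
  field_simp
  norm_num
  ring

lemma tendsto_primitiveMulArctanDiv_nhdsGT_zero (c : ℝ) :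
    Tendsto (primitiveMulArctanDiv c) (𝓝[>] 0) (𝓝 0) := by
  have hsq : Tendsto (fun t : ℝ => t ^ 2 / 2 * arctan (c / t)) (𝓝[>] 0) (𝓝 0) := by
    refine squeeze_zero_norm (fun t => ?_)
      ((((continuous_pow 2).div_const 2).mul_const (π / 2)).tendsto' 0 0 (by simp)
        |>.mono_left nhdsWithin_le_nhds)
    rw [norm_mul, Real.norm_of_nonneg (by positivity)]
    gcongr
    exact abs_le.2 ⟨(neg_pi_div_two_lt_arctan _).le, (arctan_lt_pi_div_two _).le⟩
  have hrest : Tendsto (fun t : ℝ => c * t / 2 - c ^ 2 / 2 * arctan (t / c)) (𝓝[>] 0) (𝓝 0) :=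
    (((continuous_const.mul continuous_id).div_const 2).sub
      ((continuous_arctan.comp (continuous_id.div_const c)).const_mul _)).tendsto' 0 0 (by simp)
      |>.mono_left nhdsWithin_le_nhds
  have h := hsq.add hrest
  rw [add_zero] at h
  exact h.congr fun t => by simp only [primitiveMulArctanDiv]; ring

lemma tendsto_sq_mul_arctan_div_sub_atTop (c : ℝ) :
    Tendsto (fun t : ℝ => t ^ 2 * arctan (c / t) - c * t) atTop (𝓝 0) := by
  refine squeeze_zero_norm' ?_ (tendsto_inv_atTop_zero.const_mul (|c| ^ 3) |>.trans (by simp))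
  filter_upwards [eventually_gt_atTop 0] with t ht
  calc ‖t ^ 2 * arctan (c / t) - c * t‖ = t ^ 2 * |arctan (c / t) - c / t| := by
        rw [Real.norm_eq_abs, ← abs_of_pos (pow_pos ht 2), ← abs_mul, abs_of_pos (pow_pos ht 2)]
        congr 1
        field_simp
    _ ≤ t ^ 2 * |c / t| ^ 3 := by gcongr; exact abs_arctan_sub_self_le _
    _ = |c| ^ 3 * t⁻¹ := by rw [abs_div, abs_of_pos ht]; field_simp

lemma tendsto_sq_mul_arctan_div_atTop (c : ℝ) :
    Tendsto (fun t : ℝ => c ^ 2 * arctan (t / c)) atTop (𝓝 (π / 2 * (c * |c|))) := by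
  rcases lt_trichotomy c 0 with hc | rfl | hc
  · rw [show π / 2 * (c * |c|) = c ^ 2 * -(π / 2) by rw [abs_of_neg hc]; ring]
    exact ((tendsto_arctan_atBot.mono_right nhdsWithin_le_nhds).comp
      (tendsto_id.atTop_div_const_of_neg hc)).const_mul (c ^ 2)
  · simp
  · rw [show π / 2 * (c * |c|) = c ^ 2 * (π / 2) by rw [abs_of_pos hc]; ring]
    exact ((tendsto_arctan_atTop.mono_right nhdsWithin_le_nhds).comp
      (tendsto_id.atTop_div_const hc)).const_mul (c ^ 2)

lemma tendsto_primitiveMulArctanDiv_sub_mul_atTop (c : ℝ) :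
    Tendsto (fun t => primitiveMulArctanDiv c t - c * t) atTop (𝓝 (-(π / 4 * (c * |c|)))) := by
  have h := ((tendsto_sq_mul_arctan_div_sub_atTop c).sub
    (tendsto_sq_mul_arctan_div_atTop c)).div_const 2
  convert h using 1
  · ext t; simp only [primitiveMulArctanDiv]; ring
  · congr 1; ring

lemma StrictMonoOn.lt_of_tendsto_nhdsGT_of_tendsto_atTop {α : Type*} [LinearOrder α]
    [TopologicalSpace α] [OrderClosedTopology α] {f : ℝ → α} {a : ℝ} {x y : α}
    (hf : StrictMonoOn f (Ioi a)) (hx : Tendsto f (𝓝[>] a) (𝓝 x))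
    (hy : Tendsto f atTop (𝓝 y)) : x < y := by
  have hx_le : x ≤ f (a + 1) := le_of_tendsto hx <| by
    filter_upwards [Ioo_mem_nhdsGT (show a < a + 1 by linarith)] with t ht
    exact (hf ht.1 (by simp) ht.2).le
  have hle_y : f (a + 2) ≤ y := ge_of_tendsto hy <| by
    filter_upwards [eventually_ge_atTop (a + 2)] with t ht
    exact hf.monotoneOn (by simp) (by simp; linarith) ht
  exact hx_le.trans_lt ((hf (by simp) (by simp) (by linarith)).trans_le hle_y)

lemma sum_mul_abs_neg_of_sum_arctan_div_pos {ι : Type*} [Fintype ι] (l : ι → ℝ)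
    (hsum : ∑ i, l i = 0) (hpos : ∀ t : ℝ, 0 < t → 0 < ∑ i, arctan (l i / t)) :
    ∑ i, l i * |l i| < 0 := by
  set H : ℝ → ℝ := fun t => ∑ i, primitiveMulArctanDiv (l i) t
  have hderiv (t : ℝ) (ht : 0 < t) : HasDerivAt H (t * ∑ i, arctan (l i / t)) t := by
    rw [Finset.mul_sum]
    exact HasDerivAt.fun_sum fun i _ => hasDerivAt_primitiveMulArctanDiv (l i) ht.ne'
  have hmono : StrictMonoOn H (Ioi 0) := by
    refine strictMonoOn_of_deriv_pos (convex_Ioi 0)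
      (fun t ht => (hderiv t ht).continuousAt.continuousWithinAt) fun t ht => ?_
    rw [interior_Ioi] at ht
    rw [(hderiv t ht).deriv]
    exact mul_pos ht (hpos t ht)
  have hzero : Tendsto H (𝓝[>] 0) (𝓝 0) := by
    simpa using tendsto_finsetSum Finset.univ fun i _ =>
      tendsto_primitiveMulArctanDiv_nhdsGT_zero (l i)
  have htop : Tendsto H atTop (𝓝 (-(π / 4 * ∑ i, l i * |l i|))) := by
    have h := tendsto_finsetSum Finset.univ fun i _ =>
      tendsto_primitiveMulArctanDiv_sub_mul_atTop (l i)
    simpa only [Finset.sum_sub_distrib, ← Finset.sum_mul, hsum, zero_mul, sub_zero,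
      Finset.sum_neg_distrib, ← Finset.mul_sum] using h
  have h := hmono.lt_of_tendsto_nhdsGT_of_tendsto_atTop hzero htop
  nlinarith [pi_pos]

/-- If `∑ i, λ i = 0` and `Θ(t) = ∑ i, arctan (λ i / t)` for `t > 0`, then a strict sign of
`Θ` on `(0, ∞)` forces the opposite strict sign of `∑ i, λ i * |λ i|`. -/
theorem sign_from_theta {n : ℕ} (l : Fin n → ℝ) (hsum : ∑ i, l i = 0) :
    ((∀ t : ℝ, 0 < t → 0 < ∑ i, arctan (l i / t)) → ∑ i, l i * |l i| < 0) ∧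
    ((∀ t : ℝ, 0 < t → ∑ i, arctan (l i / t) < 0) → 0 < ∑ i, l i * |l i|) := by
  refine ⟨sum_mul_abs_neg_of_sum_arctan_div_pos l hsum, fun hneg => ?_⟩
  have h := sum_mul_abs_neg_of_sum_arctan_div_pos (fun i => -l i) (by simp [hsum])
    fun t ht => by simpa [neg_div, arctan_neg] using hneg t ht
  simpa using h
end
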